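/- Let P be a polynomial basis with P = X V and M, O as before. For any polynomial y = P a and real numbers a_0 < b_0, the Fredholm-type integral satisfies ∫_{a_0}^{b_0} P_i(x) P_j(t) y(t) dt = P (e_{i+1}(P|_{x=b_0} − P|_{x=a_0}) O P_j(M) a), an identity of polynomials in x (the left side equals P_i(x) times a constant). -/
import Mathlib


open Polynomial Finset

/-- Matrix-vector product of an infinite matrix with a coefficient sequence. -/
noncomputable def matVec (M : ℕ → ℕ → ℝ) (v : ℕ → ℝ) : ℕ → ℝ := fun i => ∑' j, M i j * v j

/-- Product of infinite matrices (well defined for the row/column finite matrices used here). -/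
noncomputable def matMul (A B : ℕ → ℕ → ℝ) : ℕ → ℕ → ℝ := fun i j => ∑' k, A i k * B k j

/-- Powers of an infinite matrix. -/
noncomputable def matPow (M : ℕ → ℕ → ℝ) : ℕ → (ℕ → ℕ → ℝ)
  | 0 => fun i j => if i = j then (1 : ℝ) else 0
  | k + 1 => matMul (matPow M k) M

/-- Shift matrix `M_X` (multiplication by `x` in the power basis). -/
noncomputable def MX : ℕ → ℕ → ℝ := fun r c => if r = c + 1 then (1 : ℝ) else 0

/-- Differentiation matrix `N_X` in the power basis. -/
noncomputable def NXmat : ℕ → ℕ → ℝ := fun r c => if c = r + 1 then (r + 1 : ℝ) else 0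

/-- Integration matrix `O_X` in the power basis. -/
noncomputable def OX : ℕ → ℕ → ℝ := fun r c => if r = c + 1 then (1 : ℝ) / (c + 1) else 0

/-- Evaluation of a (real) polynomial at an infinite matrix. -/
noncomputable def polyEvalMat (p : Polynomial ℝ) (M : ℕ → ℕ → ℝ) : ℕ → ℕ → ℝ :=
  ∑ k ∈ Finset.range (p.natDegree + 1), p.coeff k • matPow M k

/-- Formal antiderivative (with zero constant term) of a polynomial. -/
noncomputable def antider (p : Polynomial ℝ) : Polynomial ℝ :=
  p.sum fun n c => Polynomial.C (c / (n + 1)) * Polynomial.X ^ (n + 1)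

lemma tsum_fin {f : ℕ → ℝ} {N : ℕ} (h : ∀ m, N ≤ m → f m = 0) :
    ∑' m, f m = ∑ m ∈ range N, f m :=
  tsum_eq_sum fun b hb => h b (by simpa using hb)

lemma summable_fin {f : ℕ → ℝ} {N : ℕ} (h : ∀ m, N ≤ m → f m = 0) : Summable f :=
  summable_of_ne_finset_zero (s := range N) fun b hb => h b (by simpa using hb)

lemma matVec_eq_sum {B : ℕ → ℕ → ℝ} {v : ℕ → ℝ} {N : ℕ} (hv : ∀ m, N ≤ m → v m = 0) (k : ℕ) :
    matVec B v k = ∑ c ∈ range N, B k c * v c :=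
  tsum_fin fun m hm => by rw [hv m hm, mul_zero]

lemma matVec_support {B : ℕ → ℕ → ℝ} {d : ℕ} (hB : ∀ k c, c + d ≤ k → B k c = 0)
    {v : ℕ → ℝ} {N : ℕ} (hv : ∀ m, N ≤ m → v m = 0) :
    ∀ k, N + d ≤ k → matVec B v k = 0 := by
  intro k hk
  have h : ∀ c, B k c * v c = 0 := by
    intro c
    rcases lt_or_ge c N with h | h
    · rw [hB k c (by omega), zero_mul]
    · rw [hv c h, mul_zero]
  simp only [matVec, h, tsum_zero]

lemma matVec_assoc (A B : ℕ → ℕ → ℝ) {v : ℕ → ℝ} {N : ℕ} (hv : ∀ m, N ≤ m → v m = 0)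
    (hAB : ∀ i j, ∃ K, ∀ k, K ≤ k → A i k * B k j = 0) :
    matVec (matMul A B) v = matVec A (matVec B v) := by
  funext i
  rw [show matVec (matMul A B) v i = ∑ c ∈ range N, matMul A B i c * v c from
    matVec_eq_sum hv i]
  have h1 : ∀ c, matMul A B i c * v c = ∑' k, A i k * B k c * v c := by
    intro c
    rw [matMul, ← tsum_mul_right]
  simp only [h1]
  rw [← Summable.tsum_finsetSum (fun c _ => by
    obtain ⟨K, hK⟩ := hAB i c
    exact summable_fin (N := K) fun k hk => by rw [hK k hk, zero_mul])]
  have h2 : ∀ k, ∑ c ∈ range N, A i k * B k c * v c = A i k * matVec B v k := by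
    intro k
    rw [matVec_eq_sum hv k, Finset.mul_sum]
    exact Finset.sum_congr rfl fun c _ => by ring
  simp only [h2]
  rfl

section tri
variable (P : ℕ → Polynomial ℝ) (hdeg : ∀ i, (P i).degree = i)
  (V : ℕ → ℕ → ℝ) (hV : ∀ i j, V i j = (P j).coeff i)
  (W : ℕ → ℕ → ℝ) (hWV : ∀ i j, matMul W V i j = if i = j then 1 else 0)

include hdeg hV in
lemma Vtri : ∀ l m, m < l → V l m = 0 := by
  intro l m hlm
  rw [hV]
  exact coeff_eq_zero_of_degree_lt (by rw [hdeg]; exact_mod_cast hlm)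

include hdeg hV in
lemma Vdiag : ∀ m, V m m ≠ 0 := by
  intro m
  rw [hV]
  exact coeff_ne_zero_of_eq_degree (hdeg m)

include hdeg hV hWV in
lemma Wtri : ∀ u s, u < s → W s u = 0 := by
  intro u
  induction u using Nat.strong_induction_on with
  | _ u ih =>
    intro s hus
    have h1 : matMul W V s u = 0 := by rw [hWV]; simp [Nat.ne_of_gt hus]
    have h2 : matMul W V s u = ∑ m ∈ range (u + 1), W s m * V m u := by
      apply tsum_fin
      intro m hm
      rw [Vtri P hdeg V hV m u (by omega), mul_zero]
    rw [h2, Finset.sum_range_succ] at h1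
    have h3 : ∀ m ∈ range u, W s m * V m u = 0 := by
      intro m hm
      rw [ih m (mem_range.mp hm) s (lt_trans (mem_range.mp hm) hus), zero_mul]
    rw [Finset.sum_eq_zero h3, zero_add] at h1
    exact (mul_eq_zero.mp h1).resolve_right (Vdiag P hdeg V hV u)

include hdeg in
lemma spanP : ∀ N (p : Polynomial ℝ), p.degree < (N : ℕ) →
    ∃ b : ℕ → ℝ, (∀ m, N ≤ m → b m = 0) ∧ p = ∑ m ∈ range N, b m • P m := by
  intro N
  induction N with
  | zero =>
    intro p hp
    refine ⟨0, fun m _ => rfl, ?_⟩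
    have : p = 0 := degree_eq_bot.mp (Nat.WithBot.lt_zero_iff.mp (by exact_mod_cast hp))
    simp [this]
  | succ N ih =>
    intro p hp
    set c := p.coeff N / (P N).coeff N with hc
    have hPN : (P N).coeff N ≠ 0 := coeff_ne_zero_of_eq_degree (hdeg N)
    have h1 : (p - c • P N).degree < (N : ℕ) := by
      rw [degree_lt_iff_coeff_zero]
      intro m hm
      rw [coeff_sub, coeff_smul, smul_eq_mul]
      rcases eq_or_lt_of_le hm with h | h
      · rw [← h, hc, div_mul_cancel₀ _ hPN, sub_self]
      · rw [(degree_lt_iff_coeff_zero p (N+1)).mp hp m (by omega),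
          coeff_eq_zero_of_degree_lt (by rw [hdeg]; exact_mod_cast h), mul_zero, sub_zero]
    obtain ⟨b, hb, hbp⟩ := ih _ h1
    refine ⟨fun m => if m = N then c else b m, ?_, ?_⟩
    · intro m hm
      have h2 : m ≠ N := by omega
      simp [h2, hb m (by omega)]
    · have h4 : p = (∑ m ∈ range N, b m • P m) + c • P N := by
        rw [← hbp]; ring
      rw [h4, Finset.sum_range_succ]
      congr 1
      · exact (Finset.sum_congr rfl fun m hm => by
          simp [Nat.ne_of_lt (mem_range.mp hm)]).symm
      · simp
end tri

section repr
variable (P : ℕ → Polynomial ℝ) (hdeg : ∀ i, (P i).degree = i)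
  (V : ℕ → ℕ → ℝ) (hV : ∀ i j, V i j = (P j).coeff i)
  (W : ℕ → ℕ → ℝ) (hWV : ∀ i j, matMul W V i j = if i = j then 1 else 0)

include hV in
lemma coeff_comb (b : ℕ → ℝ) (N l : ℕ) :
    (∑ m ∈ range N, b m • P m).coeff l = ∑ m ∈ range N, V l m * b m := by
  rw [finset_sum_coeff]
  exact Finset.sum_congr rfl fun m _ => by rw [coeff_smul, hV, smul_eq_mul, mul_comm]

include hdeg hV hWV in
lemma Wkey {b : ℕ → ℝ} {N : ℕ} (hb : ∀ m, N ≤ m → b m = 0) :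
    matVec W (fun l => (∑ m ∈ range N, b m • P m).coeff l) = b := by
  funext k
  have hsupp : ∀ l, N ≤ l → (∑ m ∈ range N, b m • P m).coeff l = 0 := by
    intro l hl
    rw [coeff_comb P V hV]
    exact Finset.sum_eq_zero fun m hm => by
      rw [Vtri P hdeg V hV l m (by have := mem_range.mp hm; omega), zero_mul]
  rw [matVec_eq_sum hsupp k]
  simp only [coeff_comb P V hV, Finset.mul_sum]
  rw [Finset.sum_comm]
  have h1 : ∀ m ∈ range N, ∑ l ∈ range N, W k l * (V l m * b m)
      = (if k = m then 1 else 0) * b m := by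
    intro m hm
    rw [← hWV k m, matMul, tsum_fin (N := N) (fun l hl => by
      rw [Vtri P hdeg V hV l m (by have := mem_range.mp hm; omega), mul_zero]), Finset.sum_mul]
    exact Finset.sum_congr rfl fun l _ => by ring
  rw [Finset.sum_congr rfl h1]
  simp only [ite_mul, one_mul, zero_mul]
  rw [Finset.sum_ite_eq]
  by_cases h : k ∈ range N
  · rw [if_pos h]
  · rw [if_neg h, hb k (by simpa using h)]

/-- `b` represents `p` in the basis `P`. -/
def IsRepr (b : ℕ → ℝ) (p : Polynomial ℝ) : Prop :=
  ∃ N, (∀ m, N ≤ m → b m = 0) ∧ p = ∑ m ∈ range N, b m • P m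

include hdeg hV hWV in
lemma isRepr_of_poly (p : Polynomial ℝ) : IsRepr P (matVec W (fun l => p.coeff l)) p := by
  obtain ⟨b, hb, hbp⟩ := spanP P hdeg (p.natDegree + 1) p
    (lt_of_le_of_lt degree_le_natDegree (by exact_mod_cast lt_add_one p.natDegree))
  have h1 : matVec W (fun l => p.coeff l) = b := by
    rw [show (fun l => p.coeff l) = fun l => (∑ m ∈ range (p.natDegree + 1), b m • P m).coeff l
      from by funext l; rw [← hbp]]
    exact Wkey P hdeg V hV W hWV hb
  rw [h1]
  exact ⟨_, hb, hbp⟩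
end repr

section steps
variable (P : ℕ → Polynomial ℝ) (hdeg : ∀ i, (P i).degree = i)
  (V : ℕ → ℕ → ℝ) (hV : ∀ i j, V i j = (P j).coeff i)
  (W : ℕ → ℕ → ℝ) (hWV : ∀ i j, matMul W V i j = if i = j then 1 else 0)

-- (W ∘ MX) s t = W s (t+1)
include hdeg hV hWV

lemma WMX (s t : ℕ) : matMul W MX s t = W s (t + 1) := by
  rw [matMul, tsum_eq_single (t + 1) (fun u hu => by simp [MX, hu])]
  simp [MX]

lemma WOX (s t : ℕ) : matMul W OX s t = W s (t + 1) * (1 / ((t : ℝ) + 1)) := by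
  rw [matMul, tsum_eq_single (t + 1) (fun u hu => by simp [OX, hu])]
  simp [OX]

lemma Mcolfin (s jj : ℕ) (h : jj + 2 ≤ s) : matMul (matMul W MX) V s jj = 0 := by
  rw [matMul]
  have : ∀ t, matMul W MX s t * V t jj = 0 := by
    intro t
    rcases le_or_gt t jj with h1 | h1
    · rw [WMX P hdeg V hV W hWV, Wtri P hdeg V hV W hWV (t+1) s (by omega), zero_mul]
    · rw [Vtri P hdeg V hV t jj h1, mul_zero]
  simp [this]

lemma Ocolfin (s jj : ℕ) (h : jj + 2 ≤ s) : matMul (matMul W OX) V s jj = 0 := by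
  rw [matMul]
  have : ∀ t, matMul W OX s t * V t jj = 0 := by
    intro t
    rcases le_or_gt t jj with h1 | h1
    · rw [WOX P hdeg V hV W hWV, Wtri P hdeg V hV W hWV (t+1) s (by omega), zero_mul,
        zero_mul]
    · rw [Vtri P hdeg V hV t jj h1, mul_zero]
  simp [this]
end steps

lemma antider_coeff_zero (p : Polynomial ℝ) : (antider p).coeff 0 = 0 := by
  rw [antider, Polynomial.sum, finset_sum_coeff]
  exact Finset.sum_eq_zero fun m _ => by
    rw [coeff_C_mul, coeff_X_pow, if_neg (by omega), mul_zero]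

lemma antider_coeff_succ (p : Polynomial ℝ) (c : ℕ) :
    (antider p).coeff (c + 1) = p.coeff c / ((c : ℝ) + 1) := by
  rw [antider, Polynomial.sum, finset_sum_coeff]
  have h1 : ∀ m ∈ p.support, (Polynomial.C (p.coeff m / ((m : ℝ) + 1)) * X ^ (m + 1)).coeff (c + 1)
      = if m = c then p.coeff c / ((c : ℝ) + 1) else 0 := by
    intro m _
    rw [coeff_C_mul, coeff_X_pow]
    by_cases h : m = c
    · subst h; simp
    · rw [if_neg (by omega), if_neg h, mul_zero]
  rw [Finset.sum_congr rfl h1]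
  by_cases h : c ∈ p.support
  · rw [Finset.sum_eq_single_of_mem c h (fun m _ hm => if_neg hm), if_pos rfl]
  · rw [Finset.sum_eq_zero (fun m hm => if_neg (by rintro rfl; exact h hm)),
      Polynomial.notMem_support_iff.mp h, zero_div]

section steps2
variable (P : ℕ → Polynomial ℝ) (hdeg : ∀ i, (P i).degree = i)
  (V : ℕ → ℕ → ℝ) (hV : ∀ i j, V i j = (P j).coeff i)
  (W : ℕ → ℕ → ℝ) (hWV : ∀ i j, matMul W V i j = if i = j then 1 else 0)

include hdeg hV hWV

omit hdeg hWV in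
lemma matVec_V {b : ℕ → ℝ} {N : ℕ} (hb : ∀ m, N ≤ m → b m = 0) :
    matVec V b = fun l => (∑ m ∈ range N, b m • P m).coeff l := by
  funext l
  rw [matVec_eq_sum hb l, coeff_comb P V hV]

omit hdeg hV hWV in
lemma matVec_MX (p : Polynomial ℝ) :
    matVec MX (fun l => p.coeff l) = fun r => (X * p).coeff r := by
  funext r
  cases r with
  | zero =>
    have : ∀ c, MX 0 c * p.coeff c = 0 := fun c => by simp [MX]
    simp only [matVec, this, tsum_zero]
    rw [mul_coeff_zero, coeff_X_zero, zero_mul]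
  | succ s =>
    rw [matVec, tsum_eq_single s (fun c hc => by simp only [MX]; rw [if_neg (by omega), zero_mul]),
      coeff_X_mul]
    simp [MX]

omit hdeg hV hWV in
lemma matVec_OX (p : Polynomial ℝ) :
    matVec OX (fun l => p.coeff l) = fun r => (antider p).coeff r := by
  funext r
  cases r with
  | zero =>
    have : ∀ c, OX 0 c * p.coeff c = 0 := fun c => by simp [OX]
    simp only [matVec, this, tsum_zero]
    rw [antider_coeff_zero]
  | succ s =>
    rw [matVec, tsum_eq_single s (fun c hc => by simp only [OX]; rw [if_neg (by omega), zero_mul]),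
      antider_coeff_succ]
    simp [OX]
    ring

lemma Mstep {b : ℕ → ℝ} {p : Polynomial ℝ} (h : IsRepr P b p) :
    IsRepr P (matVec (matMul (matMul W MX) V) b) (X * p) := by
  obtain ⟨N, hb, hp⟩ := h
  have h1 : matVec (matMul (matMul W MX) V) b = matVec (matMul W MX) (matVec V b) :=
    matVec_assoc _ _ hb fun i' j' => ⟨j' + 1, fun k hk => by
      rw [Vtri P hdeg V hV k j' (by omega), mul_zero]⟩
  have h2 : matVec (matMul W MX) (matVec V b) = matVec W (matVec MX (matVec V b)) :=
    matVec_assoc _ _ (matVec_support (d := 1)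
      (fun k c hkc => Vtri P hdeg V hV k c (by omega)) hb)
      fun i' j' => ⟨j' + 2, fun k hk => by simp only [MX]; rw [if_neg (by omega), mul_zero]⟩
  rw [h1, h2, matVec_V P V hV hb, ← hp, matVec_MX]
  exact isRepr_of_poly P hdeg V hV W hWV (X * p)

lemma Ostep {b : ℕ → ℝ} {p : Polynomial ℝ} (h : IsRepr P b p) :
    IsRepr P (matVec (matMul (matMul W OX) V) b) (antider p) := by
  obtain ⟨N, hb, hp⟩ := h
  have h1 : matVec (matMul (matMul W OX) V) b = matVec (matMul W OX) (matVec V b) :=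
    matVec_assoc _ _ hb fun i' j' => ⟨j' + 1, fun k hk => by
      rw [Vtri P hdeg V hV k j' (by omega), mul_zero]⟩
  have h2 : matVec (matMul W OX) (matVec V b) = matVec W (matVec OX (matVec V b)) :=
    matVec_assoc _ _ (matVec_support (d := 1)
      (fun k c hkc => Vtri P hdeg V hV k c (by omega)) hb)
      fun i' j' => ⟨j' + 2, fun k hk => by simp only [OX]; rw [if_neg (by omega), mul_zero]⟩
  rw [h1, h2, matVec_V P V hV hb, ← hp, matVec_OX]
  exact isRepr_of_poly P hdeg V hV W hWV (antider p)
end steps2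

section steps3
variable (P : ℕ → Polynomial ℝ) (hdeg : ∀ i, (P i).degree = i)
  (V : ℕ → ℕ → ℝ) (hV : ∀ i j, V i j = (P j).coeff i)
  (W : ℕ → ℕ → ℝ) (hWV : ∀ i j, matMul W V i j = if i = j then 1 else 0)
  (M : ℕ → ℕ → ℝ) (hM : M = matMul (matMul W MX) V)

include hdeg hV hWV hM

lemma Mcol (s jj : ℕ) (h : jj + 2 ≤ s) : M s jj = 0 := by
  rw [hM]; exact Mcolfin P hdeg V hV W hWV s jj h

lemma matPow_colfin : ∀ k s jj, jj + k + 1 ≤ s → matPow M k s jj = 0 := by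
  intro k
  induction k with
  | zero => intro s jj h; simp only [matPow]; rw [if_neg (by omega)]
  | succ k ih =>
    intro s jj h
    simp only [matPow, matMul]
    have h0 : ∀ t, matPow M k s t * M t jj = 0 := by
      intro t
      rcases le_or_gt t (jj + 1) with h1 | h1
      · rw [ih s t (by omega), zero_mul]
      · rw [Mcol P hdeg V hV W hWV M hM t jj (by omega), mul_zero]
    simp [h0]

lemma matVec_matPow {b : ℕ → ℝ} {p : Polynomial ℝ} (h : IsRepr P b p) :
    ∀ k, IsRepr P (matVec (matPow M k) b) (X ^ k * p) := by
  intro k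
  induction k generalizing b p with
  | zero =>
    have h1 : matVec (matPow M 0) b = b := by
      funext i
      rw [matVec, tsum_eq_single i (fun c hc => by
        simp only [matPow]; rw [if_neg (fun he => hc he.symm), zero_mul])]
      simp [matPow]
    rw [h1, pow_zero, one_mul]
    exact h
  | succ k ih =>
    obtain ⟨N, hb, hp⟩ := h
    have h1 : matVec (matPow M (k + 1)) b = matVec (matPow M k) (matVec M b) := by
      show matVec (matMul (matPow M k) M) b = _
      exact matVec_assoc _ _ hb fun i' j' => ⟨j' + 2, fun t ht => by
        rw [Mcol P hdeg V hV W hWV M hM t j' (by omega), mul_zero]⟩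
    rw [h1]
    have h2 : IsRepr P (matVec M b) (X * p) := by
      rw [hM]; exact Mstep P hdeg V hV W hWV ⟨N, hb, hp⟩
    have h3 := ih h2
    rwa [show X ^ k * (X * p) = X ^ (k+1) * p by ring] at h3

omit hdeg hV hWV hM in
lemma isRepr_ext {b : ℕ → ℝ} {p : Polynomial ℝ} {N N' : ℕ} (hN : N ≤ N')
    (hb : ∀ m, N ≤ m → b m = 0) (hp : p = ∑ m ∈ range N, b m • P m) :
    p = ∑ m ∈ range N', b m • P m := by
  rw [hp]
  exact Finset.sum_subset (f := fun m => b m • P m) (range_subset_range.mpr hN)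
    fun m _ hm => by show b m • P m = 0; rw [hb m (by simpa using hm), zero_smul]

omit hdeg hV hWV hM in
lemma isRepr_smul {b : ℕ → ℝ} {p : Polynomial ℝ} (c : ℝ) (h : IsRepr P b p) :
    IsRepr P (fun i => c * b i) (c • p) := by
  obtain ⟨N, hb, hp⟩ := h
  refine ⟨N, fun m hm => by show c * b m = 0; rw [hb m hm, mul_zero], ?_⟩
  rw [hp, smul_sum]
  exact Finset.sum_congr rfl fun m _ => by rw [smul_smul]

omit hdeg hV hWV hM in
lemma isRepr_add {b1 b2 : ℕ → ℝ} {p1 p2 : Polynomial ℝ}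
    (h1 : IsRepr P b1 p1) (h2 : IsRepr P b2 p2) :
    IsRepr P (fun i => b1 i + b2 i) (p1 + p2) := by
  obtain ⟨N1, hb1, hp1⟩ := h1
  obtain ⟨N2, hb2, hp2⟩ := h2
  refine ⟨max N1 N2, fun m hm => by
    show b1 m + b2 m = 0
    rw [hb1 m (le_trans (le_max_left _ _) hm), hb2 m (le_trans (le_max_right _ _) hm),
      add_zero], ?_⟩
  rw [isRepr_ext P (le_max_left N1 N2) hb1 hp1,
    isRepr_ext P (le_max_right N1 N2) hb2 hp2, ← Finset.sum_add_distrib]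
  exact Finset.sum_congr rfl fun m _ => by rw [add_smul]

omit hdeg hV hWV hM in
lemma isRepr_comb (s : Finset ℕ) (c : ℕ → ℝ) (bb : ℕ → ℕ → ℝ) (pp : ℕ → Polynomial ℝ)
    (h : ∀ k ∈ s, IsRepr P (bb k) (pp k)) :
    IsRepr P (fun i => ∑ k ∈ s, c k * bb k i) (∑ k ∈ s, c k • pp k) := by
  classical
  induction s using Finset.induction with
  | empty => exact ⟨0, fun m _ => by simp, by simp⟩
  | @insert x s' hx ih =>
    simp only [Finset.sum_insert hx]
    exact isRepr_add P (isRepr_smul P (c x) (h x (mem_insert_self x s')))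
      (ih fun k hk => h k (mem_insert_of_mem hk))
end steps3

section steps4
variable (P : ℕ → Polynomial ℝ) (hdeg : ∀ i, (P i).degree = i)
  (V : ℕ → ℕ → ℝ) (hV : ∀ i j, V i j = (P j).coeff i)
  (W : ℕ → ℕ → ℝ) (hWV : ∀ i j, matMul W V i j = if i = j then 1 else 0)
  (M : ℕ → ℕ → ℝ) (hM : M = matMul (matMul W MX) V)

include hdeg hV hWV hM

lemma polyEvalMat_colfin (f : Polynomial ℝ) (s jj : ℕ) (h : jj + f.natDegree + 2 ≤ s) :
    polyEvalMat f M s jj = 0 := by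
  have h1 : ∀ k ∈ range (f.natDegree + 1), (f.coeff k • matPow M k) s jj = 0 := by
    intro k hk
    have := mem_range.mp hk
    rw [Pi.smul_apply, Pi.smul_apply, matPow_colfin P hdeg V hV W hWV M hM k s jj (by omega),
      smul_zero]
  rw [polyEvalMat, Finset.sum_apply, Finset.sum_apply]
  exact Finset.sum_eq_zero fun k hk => by rw [h1 k hk]

omit hdeg hV hWV hM in
lemma matVec_polyEvalMat (f : Polynomial ℝ) {b : ℕ → ℝ} {N : ℕ} (hb : ∀ m, N ≤ m → b m = 0) :
    matVec (polyEvalMat f M) b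
      = fun i => ∑ k ∈ range (f.natDegree + 1), f.coeff k * matVec (matPow M k) b i := by
  funext i
  rw [matVec_eq_sum hb i]
  simp only [polyEvalMat, Finset.sum_apply, Pi.smul_apply, smul_eq_mul, Finset.sum_mul]
  rw [Finset.sum_comm]
  exact Finset.sum_congr rfl fun k _ => by
    rw [matVec_eq_sum hb, Finset.mul_sum]
    exact Finset.sum_congr rfl fun c _ => by ring

lemma isRepr_polyEval (f : Polynomial ℝ) {b : ℕ → ℝ} {p : Polynomial ℝ}
    (h : IsRepr P b p) : IsRepr P (matVec (polyEvalMat f M) b) (f * p) := by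
  obtain ⟨N, hb, hp⟩ := h
  rw [matVec_polyEvalMat M f hb]
  have h1 := isRepr_comb P (range (f.natDegree + 1)) (fun k => f.coeff k)
    (fun k => matVec (matPow M k) b) (fun k => X ^ k * p)
    (fun k _ => matVec_matPow P hdeg V hV W hWV M hM ⟨N, hb, hp⟩ k)
  have h2 : ∑ k ∈ range (f.natDegree + 1), f.coeff k • (X ^ k * p) = f * p := by
    conv_rhs => rw [f.as_sum_range]
    rw [Finset.sum_mul]
    exact Finset.sum_congr rfl fun k _ => by
      rw [← C_mul_X_pow_eq_monomial, smul_eq_C_mul, mul_assoc]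
  rwa [h2] at h1

omit hdeg hV hWV hM in
lemma tsum_eval (x : ℝ) {b : ℕ → ℝ} {p : Polynomial ℝ} {N : ℕ}
    (hb : ∀ m, N ≤ m → b m = 0) (hp : p = ∑ m ∈ range N, b m • P m) :
    ∑' s, (P s).eval x * b s = p.eval x := by
  rw [tsum_fin (N := N) (fun m hm => by rw [hb m hm, mul_zero]), hp, eval_finset_sum]
  exact Finset.sum_congr rfl fun m _ => by rw [eval_smul, smul_eq_mul]; ring
end steps4

/-- Fredholm-type integral:
`∫_{a_0}^{b_0} P_i(x) P_j(t) y(t) dt = P (e_{i+1}(P|_{x=b_0} − P|_{x=a_0}) O P_j(M) a)`. -/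
theorem fredholm_in_basis
    (P : ℕ → Polynomial ℝ) (hdeg : ∀ i, (P i).degree = i)
    (V : ℕ → ℕ → ℝ) (hV : ∀ i j, V i j = (P j).coeff i)
    (W : ℕ → ℕ → ℝ)
    (hWV : ∀ i j, matMul W V i j = if i = j then 1 else 0)
    (hVW : ∀ i j, matMul V W i j = if i = j then 1 else 0)
    (M : ℕ → ℕ → ℝ) (hM : M = matMul (matMul W MX) V)
    (O : ℕ → ℕ → ℝ) (hO : O = matMul (matMul W OX) V)
    (i j : ℕ) (a0 b0 : ℝ) (hab : a0 < b0)
    -- the rank-one matrix `e_{i+1}(P|_{x=b_0} − P|_{x=a_0})` (0-indexed row `i`)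
    (E : ℕ → ℕ → ℝ) (hE : ∀ r c, E r c = if r = i then (P c).eval b0 - (P c).eval a0 else 0)
    (a : ℕ → ℝ) (n : ℕ) (ha : ∀ m, n ≤ m → a m = 0) :
    P i * Polynomial.C ((antider (P j * (∑ m ∈ Finset.range n, a m • P m))).eval b0 -
        (antider (P j * (∑ m ∈ Finset.range n, a m • P m))).eval a0) =
      ∑ k ∈ Finset.range (i + j + n + 2),
        matVec (matMul (matMul E O) (polyEvalMat (P j) M)) a k • P k := by
  set y := ∑ m ∈ Finset.range n, a m • P m with hy
  set R := polyEvalMat (P j) M with hR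
  have hay : IsRepr P a y := ⟨n, ha, rfl⟩
  have hRa : IsRepr P (matVec R a) (P j * y) :=
    isRepr_polyEval P hdeg V hV W hWV M hM (P j) hay
  have hORa : IsRepr P (matVec O (matVec R a)) (antider (P j * y)) := by
    rw [hO]; exact Ostep P hdeg V hV W hWV hRa
  have hassoc1 : matVec (matMul (matMul E O) R) a = matVec (matMul E O) (matVec R a) :=
    matVec_assoc _ _ ha fun i' j' => ⟨j' + (P j).natDegree + 2, fun k hk => by
      rw [hR, polyEvalMat_colfin P hdeg V hV W hWV M hM (P j) k j' (by omega), mul_zero]⟩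
  have hRsupp : ∀ k, n + ((P j).natDegree + 2) ≤ k → matVec R a k = 0 :=
    matVec_support (d := (P j).natDegree + 2)
      (fun k c hkc => by
        rw [hR]; exact polyEvalMat_colfin P hdeg V hV W hWV M hM (P j) k c (by omega)) ha
  have hassoc2 : matVec (matMul E O) (matVec R a) = matVec E (matVec O (matVec R a)) :=
    matVec_assoc _ _ hRsupp fun i' j' => ⟨j' + 2, fun k hk => by
      rw [hO, Ocolfin P hdeg V hV W hWV k j' (by omega), mul_zero]⟩
  obtain ⟨N2, hb2, hp2⟩ := hORa
  have hvali : matVec E (matVec O (matVec R a)) i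
      = (antider (P j * y)).eval b0 - (antider (P j * y)).eval a0 := by
    rw [matVec]
    have h1 : ∀ s, E i s * matVec O (matVec R a) s
        = (P s).eval b0 * matVec O (matVec R a) s
          - (P s).eval a0 * matVec O (matVec R a) s := by
      intro s; rw [hE, if_pos rfl]; ring
    simp only [h1]
    rw [Summable.tsum_sub (summable_fin (N := N2) fun m hm => by rw [hb2 m hm, mul_zero])
      (summable_fin (N := N2) fun m hm => by rw [hb2 m hm, mul_zero]),
      tsum_eval P b0 hb2 hp2, tsum_eval P a0 hb2 hp2]
  have hval0 : ∀ k, k ≠ i → matVec E (matVec O (matVec R a)) k = 0 := by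
    intro k hk
    rw [matVec]
    have h1 : ∀ s, E k s * matVec O (matVec R a) s = 0 := fun s => by
      rw [hE, if_neg hk, zero_mul]
    simp only [h1, tsum_zero]
  have hvec : matVec (matMul (matMul E O) R) a = matVec E (matVec O (matVec R a)) :=
    hassoc1.trans hassoc2
  rw [hvec]
  rw [Finset.sum_eq_single_of_mem i (mem_range.mpr (by omega))
    (fun k _ hk => by rw [hval0 k hk, zero_smul])]
  rw [hvali, smul_eq_C_mul, mul_comm]
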